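/- arXiv:2107.14595 — 3 statements merged into one kernel-verified Lean document; each statement's English description precedes it below -/
import Mathlib

section
/- For every real eccentricity e with 0 ≤ e < 1 and every real M, Kepler's equation E − e·sin(E) = M has a unique real solution E. -/
theorem kepler_unique_solution (e : ℝ) (he0 : 0 ≤ e) (he1 : e < 1) (M : ℝ) :
    ∃! E : ℝ, E - e * Real.sin E = M := by
  set f : ℝ → ℝ := fun E => E - e * Real.sin E with hf
  have hmono : StrictMono f := by
    apply strictMono_of_deriv_pos
    intro x
    have hd : deriv f x = 1 - e * Real.cos x := by
      rw [hf]
      simp [Real.deriv_sin]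
    rw [hd]
    nlinarith [Real.neg_one_le_cos x, Real.cos_le_one x]
  have hcont : Continuous f := by
    rw [hf]; continuity
  have hsurj : Function.Surjective f := by
    apply Continuous.surjective hcont
    · apply Filter.tendsto_atTop_mono (f := fun x : ℝ => x + (-e))
        (fun x => ?_) (Filter.tendsto_atTop_add_const_right _ (-e) Filter.tendsto_id)
      have := Real.sin_le_one x
      simp only [hf]
      nlinarith
    · apply Filter.tendsto_atBot_mono (f := fun x : ℝ => x + e)
        (fun x => ?_) (Filter.tendsto_atBot_add_const_right _ e Filter.tendsto_id)
      have := Real.neg_one_le_sin x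
      simp only [hf]
      nlinarith
  obtain ⟨E, hE⟩ := hsurj M
  exact ⟨E, hE, fun y hy => hmono.injective (hy.trans hE.symm)⟩
end

section
/- For every natural number n and real x, the (2n)-th derivative of sin^{2n+1}(x) equals (1/2^{2n}) · Σ_{k=0}^{n} (−1)^{n−k} · (2n+1)!/(k!·(2n+1−k)!) · (2n−2k+1)^{2n} · sin((2n−2k+1)·x + (2n)·π/2). -/
open Finset Complex in
lemma pair_term_eq (n k : ℕ) (hk : k ≤ n) (z : ℂ) :
    ((-1:ℂ) ^ (k + (2*n+1)) * Complex.exp (-z*I) ^ k * Complex.exp (z*I) ^ (2*n+1-k)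
        * ((2*n+1).choose k : ℂ)
      + (-1:ℂ) ^ ((2*n+1-k) + (2*n+1)) * Complex.exp (-z*I) ^ (2*n+1-k)
        * Complex.exp (z*I) ^ (2*n+1-(2*n+1-k)) * ((2*n+1).choose (2*n+1-k) : ℂ))
      * I ^ (2*n+1) / 2 ^ (2*n+1)
    = (1/2^(2*n)) * ((-1:ℂ)^(n-k) * ((2*n+1).choose k : ℂ)
        * Complex.sin (((2*n-2*k+1 : ℕ) : ℂ) * z)) := by
  have hm : 2*n+1-(2*n+1-k) = k := by omega
  have hc : (2*n+1).choose (2*n+1-k) = (2*n+1).choose k :=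
    Nat.choose_symm (show k ≤ 2*n+1 by omega)
  have hodd : (-1:ℂ) ^ (2*n+1) = -1 := by
    rw [pow_succ, pow_mul]; simp
  have hs1 : (-1:ℂ) ^ (k + (2*n+1)) = -(-1:ℂ)^k := by
    rw [pow_add, hodd, mul_neg_one]
  have hs2 : (-1:ℂ) ^ ((2*n+1-k) + (2*n+1)) = (-1:ℂ)^k := by
    rw [show (2*n+1-k) + (2*n+1) = 2*(2*n+1-k) + k by omega, pow_add, pow_mul]
    simp
  have hcast : ((2*n-2*k+1 : ℕ) : ℂ) = ((2*n+1-k : ℕ) : ℂ) - (k : ℂ) := by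
    have h1 : (2:ℕ)*k ≤ 2*n := by omega
    have h2 : k ≤ 2*n+1 := by omega
    push_cast [Nat.cast_sub h1, Nat.cast_sub h2]
    ring
  have e1 : Complex.exp (-z*I) ^ k * Complex.exp (z*I) ^ (2*n+1-k)
      = Complex.exp (((2*n-2*k+1 : ℕ) : ℂ) * z * I) := by
    rw [← Complex.exp_nat_mul, ← Complex.exp_nat_mul, ← Complex.exp_add, hcast]
    ring_nf
  have e2 : Complex.exp (-z*I) ^ (2*n+1-k) * Complex.exp (z*I) ^ k
      = Complex.exp (-(((2*n-2*k+1 : ℕ) : ℂ) * z * I)) := by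
    rw [← Complex.exp_nat_mul, ← Complex.exp_nat_mul, ← Complex.exp_add, hcast]
    ring_nf
  have hsin : Complex.sin (((2*n-2*k+1 : ℕ) : ℂ) * z)
      = (Complex.exp (-(((2*n-2*k+1 : ℕ) : ℂ) * z * I))
          - Complex.exp (((2*n-2*k+1 : ℕ) : ℂ) * z * I)) * I / 2 := by
    rw [Complex.sin]; ring_nf
  have hI : (I:ℂ) ^ (2*n+1) = (-1:ℂ)^n * I := by
    rw [pow_succ, pow_mul, Complex.I_sq]
  have hsign : (-1:ℂ)^k * (-1:ℂ)^n = (-1:ℂ)^(n-k) := by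
    rw [← pow_add, show k + n = (n-k) + 2*k by omega, pow_add, pow_mul]
    simp
  rw [hm, hc, hs1, hs2, hsin, hI]
  rw [mul_assoc ((-1:ℂ)^k) (Complex.exp (-z*I) ^ (2*n+1-k)), e2]
  rw [show -(-1:ℂ)^k * Complex.exp (-z*I) ^ k * Complex.exp (z*I) ^ (2*n+1-k)
      = -((-1:ℂ)^k * (Complex.exp (-z*I) ^ k * Complex.exp (z*I) ^ (2*n+1-k))) by ring, e1]
  rw [← hsign]
  have h2 : (2:ℂ) ^ (2*n+1) ≠ 0 := pow_ne_zero _ two_ne_zero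
  have h2' : (2:ℂ) ^ (2*n) ≠ 0 := pow_ne_zero _ two_ne_zero
  field_simp
  ring

open Finset Complex in
lemma sin_odd_pow_expand (n : ℕ) (z : ℂ) :
    Complex.sin z ^ (2*n+1) = (1/2^(2*n)) * ∑ k ∈ Finset.range (n+1),
      (-1:ℂ)^(n-k) * ((2*n+1).choose k : ℂ) * Complex.sin (((2*n-2*k+1 : ℕ) : ℂ) * z) := by
  have h1 : Complex.sin z ^ (2*n+1)
      = (Complex.exp (-z*I) - Complex.exp (z*I)) ^ (2*n+1) * I ^ (2*n+1) / 2 ^ (2*n+1) := by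
    rw [Complex.sin, div_pow, mul_pow]
  set g : ℕ → ℂ := fun m =>
    (-1:ℂ) ^ (m + (2*n+1)) * Complex.exp (-z*I) ^ m * Complex.exp (z*I) ^ (2*n+1-m)
      * ((2*n+1).choose m : ℂ) with hg
  have hsp : (Complex.exp (-z*I) - Complex.exp (z*I)) ^ (2*n+1)
      = ∑ m ∈ Finset.range (2*n+1+1), g m := by
    rw [sub_pow]
  have h2 : (∑ m ∈ Finset.range (2*n+1+1), g m)
      = ∑ k ∈ Finset.range (n+1), (g k + g (2*n+1-k)) := by
    rw [show 2*n+1+1 = (n+1) + (n+1) by ring, Finset.sum_range_add,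
      ← Finset.sum_range_reflect (fun j => g (n+1+j)) (n+1), ← Finset.sum_add_distrib]
    apply Finset.sum_congr rfl
    intro k hk
    rw [Finset.mem_range] at hk
    congr 2
    omega
  rw [h1, hsp, h2, Finset.sum_mul, Finset.sum_div, Finset.mul_sum]
  apply Finset.sum_congr rfl
  intro k hk
  rw [Finset.mem_range] at hk
  exact pair_term_eq n k (by omega) z

open Real in
lemma iter_deriv_sin_mul (b : ℝ) (m : ℕ) :
    iteratedDeriv m (fun y : ℝ => Real.sin (b * y))
      = fun y => b ^ m * Real.sin (b * y + m * π / 2) := by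
  induction m with
  | zero => funext y; simp
  | succ m ih =>
    funext y
    rw [iteratedDeriv_succ, ih]
    have hl : HasDerivAt (fun y : ℝ => b * y + m * π / 2) b y := by
      simpa using ((hasDerivAt_id y).const_mul b).add_const ((m : ℝ) * π / 2)
    have H : HasDerivAt (fun y : ℝ => b ^ m * Real.sin (b * y + m * π / 2))
        (b ^ m * (Real.cos (b * y + m * π / 2) * b)) y :=
      ((Real.hasDerivAt_sin (b * y + m * π / 2)).comp y hl).const_mul (b ^ m)
    rw [H.deriv]
    have harg : b * y + ((m : ℕ) + 1 : ℝ) * π / 2 = (b * y + m * π / 2) + π / 2 := by ring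
    push_cast
    rw [harg, Real.sin_add_pi_div_two]
    ring

lemma iteratedDeriv_finset_sum {ι : Type*} (s : Finset ι) (F : ι → ℝ → ℝ) (m : ℕ)
    (h : ∀ i ∈ s, ContDiff ℝ m (F i)) (x : ℝ) :
    iteratedDeriv m (fun y => ∑ i ∈ s, F i y) x = ∑ i ∈ s, iteratedDeriv m (F i) x := by
  have hs := iteratedFDeriv_sum (𝕜 := ℝ) (f := F) (u := s) (i := m) h
  simp only [iteratedDeriv]
  rw [show (fun y => ∑ i ∈ s, F i y) = (∑ i ∈ s, F i ·) from rfl, hs]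
  simp [ContinuousMultilinearMap.sum_apply]

lemma iteratedDeriv_const_mul' (c : ℝ) {f : ℝ → ℝ} (m : ℕ) (hf : ContDiff ℝ m f) (x : ℝ) :
    iteratedDeriv m (fun y => c * f y) x = c * iteratedDeriv m f x := by
  simp only [← iteratedDerivWithin_univ]
  exact iteratedDerivWithin_const_mul (Set.mem_univ x) uniqueDiffOn_univ c hf.contDiffWithinAt

open Real in
theorem iteratedDeriv_sin_odd_pow (n : ℕ) (x : ℝ) :
    iteratedDeriv (2 * n) (fun y : ℝ => Real.sin y ^ (2 * n + 1)) x
      = (1 / 2 ^ (2 * n)) * ∑ k ∈ Finset.range (n + 1),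
          (-1 : ℝ) ^ (n - k) * ((2 * n + 1).factorial : ℝ)
            / ((k.factorial : ℝ) * ((2 * n + 1 - k).factorial : ℝ))
            * ((2 * n - 2 * k + 1 : ℕ) : ℝ) ^ (2 * n)
            * Real.sin (((2 * n - 2 * k + 1 : ℕ) : ℝ) * x + (2 * n) * π / 2) := by
  have hreal : ∀ y : ℝ, Real.sin y ^ (2*n+1)
      = ∑ k ∈ Finset.range (n+1),
          (1/2^(2*n) * ((-1:ℝ)^(n-k) * ((2*n+1).choose k : ℝ)))
            * Real.sin (((2*n-2*k+1 : ℕ) : ℝ) * y) := by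
    intro y
    have hC := sin_odd_pow_expand n (y : ℂ)
    rw [Finset.mul_sum] at hC
    have : ((Real.sin y ^ (2*n+1) : ℝ) : ℂ)
        = ((∑ k ∈ Finset.range (n+1),
            (1/2^(2*n) * ((-1:ℝ)^(n-k) * ((2*n+1).choose k : ℝ)))
              * Real.sin (((2*n-2*k+1 : ℕ) : ℝ) * y) : ℝ) : ℂ) := by
      push_cast
      rw [hC]
      apply Finset.sum_congr rfl
      intro k hk
      push_cast
      ring
    exact_mod_cast this
  rw [show (fun y : ℝ => Real.sin y ^ (2*n+1))
      = (fun y : ℝ => ∑ k ∈ Finset.range (n+1),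
          (1/2^(2*n) * ((-1:ℝ)^(n-k) * ((2*n+1).choose k : ℝ)))
            * Real.sin (((2*n-2*k+1 : ℕ) : ℝ) * y)) from funext hreal]
  have hcd : ∀ k : ℕ, ContDiff ℝ ((2*n : ℕ) : ℕ∞)
      (fun y : ℝ => Real.sin (((2*n-2*k+1 : ℕ) : ℝ) * y)) :=
    fun k => (Real.contDiff_sin.comp (contDiff_const.mul contDiff_id)).of_le le_top
  rw [iteratedDeriv_finset_sum _ _ (2*n) (fun k _ => contDiff_const.mul (hcd k)) x,
    Finset.mul_sum]
  apply Finset.sum_congr rfl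
  intro k hk
  rw [Finset.mem_range] at hk
  rw [iteratedDeriv_const_mul' _ (2*n) (hcd k) x,
    congrFun (iter_deriv_sin_mul (((2*n-2*k+1 : ℕ) : ℝ)) (2*n)) x]
  rw [Nat.cast_choose ℝ (show k ≤ 2*n+1 by omega)]
  push_cast
  ring
end

section
/- The generating function of the Catalan numbers satisfies: for real t with |t| < 1/4, x = Σ_{m=0}^{∞} C_m · t^{m+1} (where C_m is the m-th Catalan number) satisfies x² − x + t = 0. -/
open Finset Nat

lemma my_centralBinom_le_four_pow (n : ℕ) : Nat.centralBinom n ≤ 4 ^ n := by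
  have h : Nat.centralBinom n ≤ ∑ m ∈ Finset.range (2 * n + 1), (2 * n).choose m :=
    Finset.single_le_sum (f := fun m => (2 * n).choose m) (fun i _ => Nat.zero_le _)
      (Finset.mem_range.mpr (by omega))
  rw [Nat.sum_range_choose] at h
  calc Nat.centralBinom n ≤ 2 ^ (2 * n) := h
    _ = 4 ^ n := by rw [pow_mul]; norm_num

lemma my_catalan_le_four_pow (n : ℕ) : catalan n ≤ 4 ^ n :=
  le_trans (by rw [catalan_eq_centralBinom_div]; exact Nat.div_le_self _ _)
    (my_centralBinom_le_four_pow n)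

theorem catalan_generating_function_root (t : ℝ) (ht : |t| < 1/4) :
    ∃ x : ℝ, HasSum (fun m : ℕ => (catalan m : ℝ) * t ^ (m + 1)) x ∧ x ^ 2 - x + t = 0 := by
  set f : ℕ → ℝ := fun m => (catalan m : ℝ) * t ^ (m + 1) with hf
  have hr : 4 * |t| < 1 := by linarith
  have hs : Summable fun m => ‖f m‖ := by
    refine Summable.of_nonneg_of_le (fun _ => norm_nonneg _) (fun m => ?_)
      ((summable_geometric_of_lt_one (by positivity) hr).mul_left |t|)
    have h1 : ‖f m‖ = (catalan m : ℝ) * |t| ^ (m + 1) := by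
      rw [hf]; rw [norm_mul, norm_pow]
      simp [abs_of_nonneg, Real.norm_eq_abs]
    rw [h1]
    have h2 : (catalan m : ℝ) ≤ 4 ^ m := by
      calc (catalan m : ℝ) ≤ ((4 ^ m : ℕ) : ℝ) := Nat.cast_le.mpr (my_catalan_le_four_pow m)
        _ = 4 ^ m := by push_cast; ring
    calc (catalan m : ℝ) * |t| ^ (m + 1) ≤ 4 ^ m * |t| ^ (m + 1) :=
          mul_le_mul_of_nonneg_right h2 (pow_nonneg (abs_nonneg t) _)
      _ = |t| * (4 * |t|) ^ m := by rw [pow_succ, mul_pow]; ring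
  have hsum : HasSum f (∑' m, f m) := hs.of_norm.hasSum
  set x := ∑' m, f m with hx
  refine ⟨x, hsum, ?_⟩
  have hmul : x * x = ∑' n, ∑ kl ∈ antidiagonal n, f kl.1 * f kl.2 :=
    tsum_mul_tsum_eq_tsum_sum_antidiagonal_of_summable_norm hs hs
  have hinner : ∀ n : ℕ, ∑ kl ∈ antidiagonal n, f kl.1 * f kl.2
      = (catalan (n + 1) : ℝ) * t ^ (n + 2) := by
    intro n
    rw [catalan_succ' n]
    push_cast
    rw [Finset.sum_mul]
    apply Finset.sum_congr rfl
    intro kl hkl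
    have h := Finset.HasAntidiagonal.mem_antidiagonal.mp hkl
    rw [hf]
    have : t ^ (kl.1 + 1) * t ^ (kl.2 + 1) = t ^ (n + 2) := by
      rw [← pow_add]; congr 1; omega
    calc (catalan kl.1 : ℝ) * t ^ (kl.1 + 1) * ((catalan kl.2 : ℝ) * t ^ (kl.2 + 1))
        = (catalan kl.1 : ℝ) * (catalan kl.2 : ℝ) * (t ^ (kl.1 + 1) * t ^ (kl.2 + 1)) := by ring
      _ = (catalan kl.1 : ℝ) * (catalan kl.2 : ℝ) * t ^ (n + 2) := by rw [this]
  have hshift : HasSum (fun n => f (n + 1)) (x - t) := by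
    refine (hasSum_nat_add_iff (f := f) 1).mpr ?_
    convert hsum using 1
    · rfl
    simp [hf]
  have hx2 : x * x = x - t := by
    rw [hmul]
    have : ∀ n : ℕ, ∑ kl ∈ antidiagonal n, f kl.1 * f kl.2 = f (n + 1) := by
      intro n; rw [hinner n, hf]
    rw [tsum_congr this, hshift.tsum_eq]
  have : x ^ 2 = x * x := sq x
  rw [this, hx2]; ring
end
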